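/- Let (X,d) be a proper geodesic metric space, φ : X → ℝ a Kantorovich potential, and γ a φ-Kantorovich geodesic with ℓ := ℓ(γ) > 0. Let z_ac : (0,1) → ℝ be locally absolutely continuous, and assume that for Lebesgue-a.e. t ∈ (0,1), both maps τ ↦ φ_τ(γ_t) and τ ↦ φ̄_τ(γ_t) have a second Peano derivative at τ = t equal to z_ac(t). Then for any r₀ ∈ (0,1), the function L(r) := exp(−(1/ℓ²)·∫_{r₀}^{r} z_ac(t) dt) is concave on (0,1). -/

import Mathlib

/-- `ψ` is pointwise the `c`-transform of `φ` for the cost `c = d²/2`: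
at every point `x`, `ψ x` is a genuine (finite) infimum of `d(x,y)²/2 - φ(y)` over `y`. -/
def IsCTransform {X : Type*} [MetricSpace X] (φ ψ : X → ℝ) : Prop :=
  ∀ x : X, IsGLB {v : ℝ | ∃ y : X, v = dist x y ^ 2 / 2 - φ y} (ψ x)

/-- `φ` is a Kantorovich potential with (real-valued) conjugate potential `φc`. -/
def IsKantorovichPair {X : Type*} [MetricSpace X] (φ φc : X → ℝ) : Prop :=
  IsCTransform φ φc ∧ IsCTransform φc φ

/-- A constant-speed geodesic parametrized on `[0,1]`. -/
def IsGeodesic {X : Type*} [MetricSpace X] (γ : ℝ → X) : Prop :=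
  ∀ s ∈ Set.Icc (0:ℝ) 1, ∀ t ∈ Set.Icc (0:ℝ) 1,
    dist (γ s) (γ t) = |s - t| * dist (γ 0) (γ 1)

/-- A `φ`-Kantorovich geodesic: a geodesic with `φ(γ₀) + φ^c(γ₁) = ℓ(γ)²/2`,
where `ℓ(γ) = d(γ₀,γ₁)`. -/
def IsKantorovichGeodesic {X : Type*} [MetricSpace X] (φ φc : X → ℝ) (γ : ℝ → X) : Prop :=
  IsGeodesic γ ∧ φ (γ 0) + φc (γ 1) = dist (γ 0) (γ 1) ^ 2 / 2

/-- A metric space is geodesic if every pair of points is joined by a geodesic. -/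
def IsGeodesicSpace (X : Type*) [MetricSpace X] : Prop :=
  ∀ x y : X, ∃ γ : ℝ → X, IsGeodesic γ ∧ γ 0 = x ∧ γ 1 = y

/-- The interpolating intermediate-time Kantorovich potential
`φ_t(x) = -inf_y (d(x,y)²/(2t) - φ(y))` for `t ≠ 0`, and `φ_0 = φ`. -/
noncomputable def interpPotential {X : Type*} [MetricSpace X] (φ : X → ℝ) (t : ℝ) (x : X) : ℝ :=
  if t = 0 then φ x
  else -sInf {v : ℝ | ∃ y : X, v = dist x y ^ 2 / (2 * t) - φ y}

/-- The time-reversed interpolating Kantorovich potential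
`φ̄_t(x) = inf_y (d(x,y)²/(2(1-t)) - φ^c(y))` for `t ≠ 1`, and `φ̄_1 = -φ^c`. -/
noncomputable def reversePotential {X : Type*} [MetricSpace X] (φc : X → ℝ) (t : ℝ) (x : X) : ℝ :=
  if t = 1 then -φc x
  else sInf {v : ℝ | ∃ y : X, v = dist x y ^ 2 / (2 * (1 - t)) - φc y}

/-- `g` has a second Peano derivative `q` at `τ₀`: it is differentiable at `τ₀` (with some
derivative `d`) and `g(τ₀+ε) = g(τ₀) + d·ε + q·ε²/2 + o(ε²)` as `ε → 0`. -/
def HasSecondPeanoDerivAt (g : ℝ → ℝ) (q : ℝ) (τ₀ : ℝ) : Prop :=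
  ∃ d : ℝ, HasDerivAt g d τ₀ ∧
    Asymptotics.IsLittleO (nhds (0 : ℝ))
      (fun ε : ℝ => g (τ₀ + ε) - g τ₀ - d * ε - q * ε ^ 2 / 2)
      (fun ε : ℝ => ε ^ 2)

/-!
Along the Kantorovich geodesic the Hopf–Lax inequality
`φ_{τ'}(x') - d(x,x')²/(2(τ-τ')) ≤ φ_τ(x)` is an equality at `(τ', x', τ, x) = (s, γ_s, t, γ_t)`.
Expanding it to second order around such a point, at two times `s < t` where `φ_·(γ_s)` and
`φ_·(γ_t)` have second Peano derivatives, shows that the quadratic form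
`z_t λ² - z_s μ² + ℓ²(λ-μ)²/(t-s)` is nonnegative; by continuity of `z` this holds for all
`s < t`. Its determinant condition `z_s z_t (t-s) ≤ ℓ²(z_t - z_s)` is an integrated form of the
Riccati inequality `z' ≥ z²/ℓ²`, which is exactly `L'' ≤ 0`: comparing `z` with the explicit
Riccati solution through `m` puts `L` below its tangent line at `m`.
-/

open Set Filter Topology Asymptotics MeasureTheory

lemma sq_add_div_add_le {p q a b : ℝ} (ha : 0 < a) (hb : 0 < b) :
    (p + q) ^ 2 / (a + b) ≤ p ^ 2 / a + q ^ 2 / b := by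
  rw [div_add_div _ _ ha.ne' hb.ne', div_le_div_iff₀ (by positivity) (by positivity)]
  nlinarith [sq_nonneg (p * b - q * a), mul_pos ha hb]

lemma Asymptotics.IsLittleO.comp_const_mul_sq {f : ℝ → ℝ} (h : f =o[𝓝 0] fun ε => ε ^ 2) (a : ℝ) :
    (fun σ => f (a * σ)) =o[𝓝 0] fun σ => σ ^ 2 := by
  have hlim : Tendsto (fun σ : ℝ => a * σ) (𝓝 0) (𝓝 0) := by
    simpa using (continuous_const_mul a).tendsto 0
  refine (h.comp_tendsto hlim).trans_isBigO ?_
  exact ((isBigO_refl (fun σ : ℝ => σ ^ 2) _).const_mul_left (a ^ 2)).congr_left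
    fun σ => by simp only [Function.comp_apply]; ring

lemma isLittleO_inv_add_mul_sub_taylor {h : ℝ} (hh : h ≠ 0) (κ : ℝ) :
    (fun σ => (h + κ * σ)⁻¹ - (h⁻¹ - κ * σ / h ^ 2 + κ ^ 2 * σ ^ 2 / h ^ 3))
      =o[𝓝 0] fun σ => σ ^ 2 := by
  set r : ℝ → ℝ := fun σ => -(κ ^ 3 * σ) / (h ^ 3 * (h + κ * σ))
  have hr : Tendsto r (𝓝 0) (𝓝 0) := by
    have : ContinuousAt r 0 := ContinuousAt.div (by fun_prop) (by fun_prop) (by simpa using hh)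
    simpa [r] using this.tendsto
  have hrσ : (fun σ => r σ * σ ^ 2) =o[𝓝 0] fun σ => (1 : ℝ) * σ ^ 2 :=
    (isLittleO_one_iff ℝ |>.2 hr).mul_isBigO (isBigO_refl _ _)
  have hne : ∀ᶠ σ in 𝓝 (0:ℝ), h + κ * σ ≠ 0 :=
    ((continuous_const.add (continuous_const_mul κ)).tendsto 0).eventually_ne (by simpa using hh)
  refine hrσ.congr' ?_ (by simp)
  filter_upwards [hne] with σ hσ
  simp only [r]
  field_simp
  ring

lemma nonneg_of_eventually_nonneg_of_isLittleO {f : ℝ → ℝ} {K : ℝ}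
    (hf : ∀ᶠ σ in 𝓝 0, 0 ≤ f σ) (ho : (fun σ => f σ - K * σ ^ 2) =o[𝓝 0] fun σ => σ ^ 2) :
    0 ≤ K := by
  by_contra! hK
  have hsmall := ho.def (c := -K / 2) (by linarith)
  have hne : ∀ᶠ σ in 𝓝[≠] (0:ℝ), σ ≠ 0 := self_mem_nhdsWithin
  obtain ⟨σ, hσ, hfσ, hoσ⟩ := (hne.and ((hf.and hsmall).filter_mono nhdsWithin_le_nhds)).exists
  have hσ2 : 0 < σ ^ 2 := pow_two_pos_of_ne_zero hσ
  rw [Real.norm_eq_abs, Real.norm_eq_abs, abs_of_pos hσ2] at hoσ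
  nlinarith [le_abs_self (f σ - K * σ ^ 2)]

lemma bounds_of_forall_quadratic_nonneg {a b c h : ℝ} (hc : 0 < c) (hh : 0 < h)
    (H : ∀ x y : ℝ, 0 ≤ a * x ^ 2 - b * y ^ 2 + c * (x - y) ^ 2 / h) :
    b * h ≤ c ∧ -c ≤ a * h ∧ b * a * h ≤ c * (a - b) := by
  set k := c / h
  have hkh : k * h = c := div_mul_cancel₀ c hh.ne'
  have hk : 0 < k := div_pos hc hh
  have H' : ∀ x y : ℝ, 0 ≤ a * x ^ 2 - b * y ^ 2 + k * (x - y) ^ 2 := fun x y => by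
    simpa only [mul_div_right_comm c] using H x y
  have hb : b ≤ k := by linarith [H' 0 1]
  have ha : 0 ≤ a + k := by linarith [H' 1 0]
  -- if `a + k = 0`, the form `-2kxy + (k - b)y²` is not bounded below in `x`
  have ha' : 0 < a + k := by
    refine ha.lt_of_ne fun hak => ?_
    have := H' ((k - b + 1) / (2 * k)) 1
    field_simp at this
    nlinarith
  have hdet : 0 ≤ k * (a - b) - a * b := by
    have hform : a * k ^ 2 - b * (a + k) ^ 2 + k * (k - (a + k)) ^ 2
        = (a + k) * (k * (a - b) - a * b) := by ring
    exact nonneg_of_mul_nonneg_right (hform ▸ H' k (a + k)) ha'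
  refine ⟨?_, ?_, ?_⟩
  · nlinarith
  · nlinarith
  · nlinarith

lemma forall_nonneg_of_ae {U : Set (ℝ × ℝ)} (hU : IsOpen U) {P : ℝ → Prop} (hP : ∀ᵐ t, P t)
    {F : ℝ × ℝ → ℝ} (hF : ContinuousOn F U) (h : ∀ x ∈ U, P x.1 → P x.2 → 0 ≤ F x) :
    ∀ x ∈ U, 0 ≤ F x := by
  intro x hx
  have hdense : Dense ({t | P t} ×ˢ {t | P t}) :=
    (Measure.dense_of_ae hP).prod (Measure.dense_of_ae hP)
  refine ContinuousWithinAt.closure_le (hdense.open_subset_closure_inter hU hx)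
    continuousWithinAt_const (hF.continuousAt (hU.mem_nhds hx)).continuousWithinAt ?_
  exact fun y hy => h y hy.1 hy.2.1 hy.2.2

lemma continuousOn_of_forall_eq_add_integral {z g : ℝ → ℝ} {a b : ℝ}
    (hg : ∀ x ∈ Ioo a b, ∀ y ∈ Ioo a b, IntervalIntegrable g volume x y)
    (hz : ∀ x ∈ Ioo a b, ∀ y ∈ Ioo a b, z y = z x + ∫ u in x..y, g u) :
    ContinuousOn z (Ioo a b) := by
  intro y hy
  obtain ⟨hay, hyb⟩ := hy
  have ha' : (a + y) / 2 ∈ Ioo a b := ⟨by linarith, by linarith⟩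
  have hb' : (y + b) / 2 ∈ Ioo a b := ⟨by linarith, by linarith⟩
  have hI : uIcc ((a + y) / 2) ((y + b) / 2) = Icc ((a + y) / 2) ((y + b) / 2) :=
    uIcc_of_le (by linarith)
  have hprim := intervalIntegral.continuousOn_primitive_interval' (hg _ ha' _ hb') left_mem_uIcc
  have hcont : ContinuousOn z (uIcc ((a + y) / 2) ((y + b) / 2)) :=
    (continuousOn_const.add hprim).congr fun x hx =>
      hz _ ha' x (ordConnected_Ioo.uIcc_subset ha' hb' hx)
  rw [hI] at hcont
  exact (hcont.continuousAt (Icc_mem_nhds (by linarith) (by linarith))).continuousWithinAt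

lemma intervalIntegral.integral_le_integral_of_le_of_ge {f g : ℝ → ℝ} {a b : ℝ}
    (hf : IntervalIntegrable f volume a b) (hg : IntervalIntegrable g volume a b)
    (hab : a ≤ b → ∀ x ∈ Icc a b, f x ≤ g x) (hba : b ≤ a → ∀ x ∈ Icc b a, g x ≤ f x) :
    ∫ x in a..b, f x ≤ ∫ x in a..b, g x := by
  rcases le_total a b with h | h
  · exact intervalIntegral.integral_mono_on h hf hg (hab h)
  · rw [intervalIntegral.integral_symm b a, intervalIntegral.integral_symm b a, neg_le_neg_iff]
    exact intervalIntegral.integral_mono_on h hg.symm hf.symm (hba h)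

lemma concaveOn_of_le_add_mul_sub {s : Set ℝ} (hs : Convex ℝ s) {f f' : ℝ → ℝ}
    (h : ∀ m ∈ s, ∀ p ∈ s, f p ≤ f m + f' m * (p - m)) : ConcaveOn ℝ s f := by
  refine ⟨hs, fun x hx y hy a b ha hb hab => ?_⟩
  have hm := hs hx hy ha hb hab
  simp only [smul_eq_mul] at hm ⊢
  have hx' := mul_le_mul_of_nonneg_left (h _ hm x hx) ha
  have hy' := mul_le_mul_of_nonneg_left (h _ hm y hy) hb
  have hsum : a * (x - (a * x + b * y)) + b * (y - (a * x + b * y)) = 0 := by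
    linear_combination (-(a * x + b * y)) * hab
  linear_combination hx' + hy' + f' (a * x + b * y) * hsum + f (a * x + b * y) * hab

section KantorovichGeodesic

variable {X : Type*} [MetricSpace X] {φ φc : X → ℝ} {γ : ℝ → X}

lemma IsCTransform.le_sub (h : IsCTransform φc φ) (x y : X) : φ x ≤ dist x y ^ 2 / 2 - φc y :=
  (h x).1 ⟨y, rfl⟩

lemma IsCTransform.bddBelow (h : IsCTransform φc φ) (x : X) {τ : ℝ} (h0 : 0 < τ) (h1 : τ ≤ 1) :
    BddBelow {v : ℝ | ∃ y : X, v = dist x y ^ 2 / (2 * τ) - φ y} := by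
  refine ⟨φc x, ?_⟩
  rintro _ ⟨y, rfl⟩
  have : dist x y ^ 2 / 2 ≤ dist x y ^ 2 / (2 * τ) :=
    div_le_div_of_nonneg_left (by positivity) (by positivity) (by linarith)
  have hy := h.le_sub y x
  rw [dist_comm] at hy
  linarith

lemma interpPotential_sub_le (h : IsCTransform φc φ) (x x' : X) {τ' τ : ℝ}
    (h0 : 0 < τ') (hlt : τ' < τ) (h1 : τ ≤ 1) :
    interpPotential φ τ' x' - dist x x' ^ 2 / (2 * (τ - τ')) ≤ interpPotential φ τ x := by
  simp only [interpPotential, if_neg (h0.trans hlt).ne', if_neg h0.ne']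
  suffices sInf {v : ℝ | ∃ y : X, v = dist x y ^ 2 / (2 * τ) - φ y} - dist x x' ^ 2 / (2 * (τ - τ'))
      ≤ sInf {v : ℝ | ∃ y : X, v = dist x' y ^ 2 / (2 * τ') - φ y} by linarith
  refine le_csInf ⟨_, x', rfl⟩ ?_
  rintro _ ⟨y, rfl⟩
  have hsq : dist x y ^ 2 ≤ (dist x x' + dist x' y) ^ 2 :=
    pow_le_pow_left₀ dist_nonneg (dist_triangle x x' y) 2
  have hy : dist x y ^ 2 / (2 * τ) ≤ dist x x' ^ 2 / (2 * (τ - τ')) + dist x' y ^ 2 / (2 * τ') :=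
    calc dist x y ^ 2 / (2 * τ) = dist x y ^ 2 / (2 * (τ - τ') + 2 * τ') := by ring_nf
      _ ≤ (dist x x' + dist x' y) ^ 2 / (2 * (τ - τ') + 2 * τ') := by gcongr
      _ ≤ _ := sq_add_div_add_le (by linarith) (by linarith)
  linarith [csInf_le (h.bddBelow x (h0.trans hlt) h1) ⟨y, rfl⟩]

lemma IsGeodesic.dist_eq (hg : IsGeodesic γ) {s t : ℝ} (hs : s ∈ Icc (0:ℝ) 1)
    (ht : t ∈ Icc (0:ℝ) 1) (hst : s ≤ t) :
    dist (γ s) (γ t) = (t - s) * dist (γ 0) (γ 1) := by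
  rw [hg s hs t ht, abs_of_nonpos (by linarith), neg_sub]

lemma sub_le_interpPotential_geodesic (hT : IsCTransform φc φ) (hg : IsGeodesic γ)
    {t τ : ℝ} (ht : t ∈ Icc (0:ℝ) 1) (h0 : 0 < τ) (h1 : τ ≤ 1) :
    φ (γ 0) - (t * dist (γ 0) (γ 1)) ^ 2 / (2 * τ) ≤ interpPotential φ τ (γ t) := by
  have hd : dist (γ t) (γ 0) = t * dist (γ 0) (γ 1) := by
    rw [dist_comm, hg.dist_eq (left_mem_Icc.2 zero_le_one) ht ht.1, sub_zero]
  rw [interpPotential, if_neg h0.ne', ← hd]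
  linarith [csInf_le (hT.bddBelow (γ t) h0 h1) ⟨γ 0, rfl⟩]

/-- Along a Kantorovich geodesic the infimum defining `φ_t(γ_t)` is attained at `γ_0`. -/
lemma interpPotential_geodesic_self (hT : IsCTransform φc φ) (hγ : IsKantorovichGeodesic φ φc γ)
    {t : ℝ} (ht : t ∈ Ioo (0:ℝ) 1) :
    interpPotential φ t (γ t) = φ (γ 0) - t * dist (γ 0) (γ 1) ^ 2 / 2 := by
  set l := dist (γ 0) (γ 1)
  obtain ⟨h0, h1⟩ := ht
  have hIcc : t ∈ Icc (0:ℝ) 1 := ⟨h0.le, h1.le⟩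
  have hge := sub_le_interpPotential_geodesic hT hγ.1 hIcc h0 h1.le
  rw [show (t * l) ^ 2 / (2 * t) = t * l ^ 2 / 2 by field_simp] at hge
  refine le_antisymm ?_ hge
  rw [interpPotential, if_neg h0.ne', neg_le, neg_sub]
  refine le_csInf ⟨_, γ t, rfl⟩ ?_
  rintro _ ⟨y, rfl⟩
  have hd : dist (γ t) (γ 1) = (1 - t) * l := hγ.1.dist_eq hIcc (right_mem_Icc.2 zero_le_one) h1.le
  have htri : dist y (γ 1) ≤ dist (γ t) y + (1 - t) * l := by
    linarith [dist_triangle y (γ t) (γ 1), dist_comm y (γ t)]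
  have hsq := pow_le_pow_left₀ dist_nonneg htri 2
  rw [le_sub_iff_add_le, le_div_iff₀ (by positivity)]
  nlinarith [hT.le_sub y (γ 1), hγ.2,
    mul_nonneg (sub_pos.2 h1).le (sq_nonneg (dist (γ t) y - t * l))]

/-- `τ ↦ φ_τ(γ_t) + (tℓ)²/(2τ)` is minimal at `τ = t`, which pins down the derivative. -/
lemma HasDerivAt.eq_of_interpPotential_geodesic (hT : IsCTransform φc φ)
    (hγ : IsKantorovichGeodesic φ φc γ) {t d : ℝ} (ht : t ∈ Ioo (0:ℝ) 1)
    (hd : HasDerivAt (fun τ => interpPotential φ τ (γ t)) d t) :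
    d = dist (γ 0) (γ 1) ^ 2 / 2 := by
  set l := dist (γ 0) (γ 1)
  have ht0 : t ≠ 0 := ht.1.ne'
  have hGd : HasDerivAt (fun τ => interpPotential φ τ (γ t) + (t * l) ^ 2 / 2 * τ⁻¹)
      (d + (t * l) ^ 2 / 2 * -(t ^ 2)⁻¹) t :=
    hd.add ((hasDerivAt_inv ht0).const_mul _)
  have hmin : IsLocalMin (fun τ => interpPotential φ τ (γ t) + (t * l) ^ 2 / 2 * τ⁻¹) t := by
    filter_upwards [isOpen_Ioo.mem_nhds ht] with τ hτ
    have hge := sub_le_interpPotential_geodesic hT hγ.1 ⟨ht.1.le, ht.2.le⟩ hτ.1 hτ.2.le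
    have ht' : (t * l) ^ 2 / 2 * t⁻¹ = t * l ^ 2 / 2 := by field_simp
    have hτ' : (t * l) ^ 2 / 2 * τ⁻¹ = (t * l) ^ 2 / (2 * τ) := by ring
    rw [interpPotential_geodesic_self hT hγ ht, ht', hτ']
    linarith
  have := hmin.hasDerivAt_eq_zero hGd
  field_simp at this
  linarith

/-- Expand the Hopf–Lax inequality
`φ_{s+bσ}(γ_s) - d(γ_s,γ_t)²/(2(t-s+(a-b)σ)) ≤ φ_{t+aσ}(γ_t)` to second order in `σ`. -/
lemma quadratic_nonneg_of_hasSecondPeanoDerivAt (hT : IsCTransform φc φ)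
    (hγ : IsKantorovichGeodesic φ φc γ) {s t zs zt : ℝ} (hs : s ∈ Ioo (0:ℝ) 1)
    (ht : t ∈ Ioo (0:ℝ) 1) (hst : s < t)
    (hps : HasSecondPeanoDerivAt (fun τ => interpPotential φ τ (γ s)) zs s)
    (hpt : HasSecondPeanoDerivAt (fun τ => interpPotential φ τ (γ t)) zt t) (a b : ℝ) :
    0 ≤ zt * a ^ 2 - zs * b ^ 2 + dist (γ 0) (γ 1) ^ 2 * (a - b) ^ 2 / (t - s) := by
  set l := dist (γ 0) (γ 1)
  obtain ⟨dt, hdt, hot⟩ := hpt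
  obtain ⟨ds, hds, hos⟩ := hps
  rw [hdt.eq_of_interpPotential_geodesic hT hγ ht] at hot
  rw [hds.eq_of_interpPotential_geodesic hT hγ hs] at hos
  have hh : 0 < t - s := sub_pos.2 hst
  set f : ℝ → ℝ := fun σ => interpPotential φ (t + a * σ) (γ t)
    - interpPotential φ (s + b * σ) (γ s) + ((t - s) * l) ^ 2 / (2 * (t - s + (a - b) * σ))
  have hf : ∀ᶠ σ in 𝓝 0, 0 ≤ f σ := by
    have hs' : Tendsto (fun σ : ℝ => s + b * σ) (𝓝 0) (𝓝 s) :=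
      (continuous_const.add (continuous_const_mul b)).tendsto' 0 s (by simp)
    have ht' : Tendsto (fun σ : ℝ => t + a * σ) (𝓝 0) (𝓝 t) :=
      (continuous_const.add (continuous_const_mul a)).tendsto' 0 t (by simp)
    filter_upwards [hs'.eventually_const_lt hs.1, hs'.eventually_lt ht' hst,
      ht'.eventually_lt_const ht.2] with σ h0 hlt h1
    have hHL := interpPotential_sub_le hT (γ t) (γ s) h0 hlt h1.le
    rw [dist_comm, hγ.1.dist_eq ⟨hs.1.le, hs.2.le⟩ ⟨ht.1.le, ht.2.le⟩ hst.le,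
      show t + a * σ - (s + b * σ) = t - s + (a - b) * σ by ring] at hHL
    simp only [f]
    linarith
  have ho := ((hot.comp_const_mul_sq a).sub (hos.comp_const_mul_sq b)).add
    ((isLittleO_inv_add_mul_sub_taylor hh.ne' (a - b)).const_mul_left (((t - s) * l) ^ 2 / 2))
  suffices 0 ≤ (zt * a ^ 2 - zs * b ^ 2 + l ^ 2 * (a - b) ^ 2 / (t - s)) / 2 by linarith
  refine nonneg_of_eventually_nonneg_of_isLittleO hf (ho.congr_left fun σ => ?_)
  simp only [f]
  rw [interpPotential_geodesic_self hT hγ ht, interpPotential_geodesic_self hT hγ hs]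
  field_simp
  ring

lemma quadratic_nonneg_of_ae
    (hT : IsCTransform φc φ) (hγ : IsKantorovichGeodesic φ φc γ) {z : ℝ → ℝ}
    (hz : ContinuousOn z (Ioo 0 1))
    (hae : ∀ᵐ t ∂volume.restrict (Ioo (0:ℝ) 1),
      HasSecondPeanoDerivAt (fun τ => interpPotential φ τ (γ t)) (z t) t)
    (s : ℝ) (hs : s ∈ Ioo (0:ℝ) 1) (t : ℝ) (ht : t ∈ Ioo (0:ℝ) 1) (hst : s < t) (x y : ℝ) :
    0 ≤ z t * x ^ 2 - z s * y ^ 2 + dist (γ 0) (γ 1) ^ 2 * (x - y) ^ 2 / (t - s) := by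
  set U : Set (ℝ × ℝ) := Ioo 0 1 ×ˢ Ioo 0 1 ∩ {q | q.1 < q.2}
  have hU : IsOpen U := (isOpen_Ioo.prod isOpen_Ioo).inter (isOpen_lt continuous_fst continuous_snd)
  have hF : ContinuousOn (fun q : ℝ × ℝ =>
      z q.2 * x ^ 2 - z q.1 * y ^ 2 + dist (γ 0) (γ 1) ^ 2 * (x - y) ^ 2 / (q.2 - q.1)) U := by
    have h1 : ContinuousOn (fun q : ℝ × ℝ => z q.1) U :=
      hz.comp continuousOn_fst fun q hq => hq.1.1
    have h2 : ContinuousOn (fun q : ℝ × ℝ => z q.2) U :=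
      hz.comp continuousOn_snd fun q hq => hq.1.2
    exact ((h2.mul continuousOn_const).sub (h1.mul continuousOn_const)).add
      (continuousOn_const.div (by fun_prop) fun q hq => (sub_pos.2 hq.2).ne')
  refine forall_nonneg_of_ae hU ((ae_restrict_iff' measurableSet_Ioo).1 hae) hF
    (fun q hq hq1 hq2 => ?_) (s, t) ⟨⟨hs, ht⟩, hst⟩
  exact quadratic_nonneg_of_hasSecondPeanoDerivAt hT hγ hq.1.1 hq.1.2 hq.2
    (hq1 hq.1.1) (hq2 hq.1.2) x y

end KantorovichGeodesic

section Riccati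

variable {z : ℝ → ℝ} {c a b : ℝ}

lemma mul_sub_le_of_forall_quadratic_nonneg (hc : 0 < c)
    (hquad : ∀ s ∈ Ioo a b, ∀ t ∈ Ioo a b, s < t →
      ∀ x y : ℝ, 0 ≤ z t * x ^ 2 - z s * y ^ 2 + c * (x - y) ^ 2 / (t - s)) :
    ∀ s ∈ Ioo a b, ∀ t ∈ Ioo a b, z s * (t - s) ≤ c := by
  intro s hs t ht
  rcases lt_trichotomy s t with hst | rfl | hts
  · exact (bounds_of_forall_quadratic_nonneg hc (sub_pos.2 hst) (hquad s hs t ht hst)).1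
  · simpa using hc.le
  · have := (bounds_of_forall_quadratic_nonneg hc (sub_pos.2 hts) (hquad t ht s hs hts)).2.1
    linarith

lemma riccati_of_forall_quadratic_nonneg (hc : 0 < c)
    (hquad : ∀ s ∈ Ioo a b, ∀ t ∈ Ioo a b, s < t →
      ∀ x y : ℝ, 0 ≤ z t * x ^ 2 - z s * y ^ 2 + c * (x - y) ^ 2 / (t - s)) :
    ∀ s ∈ Ioo a b, ∀ t ∈ Ioo a b, s ≤ t → z s * z t * (t - s) ≤ c * (z t - z s) := by
  intro s hs t ht hst
  rcases hst.eq_or_lt with rfl | hst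
  · simp
  · exact (bounds_of_forall_quadratic_nonneg hc (sub_pos.2 hst) (hquad s hs t ht hst)).2.2

lemma mul_sub_lt_of_forall_mul_sub_le {w m u : ℝ} (hc : 0 < c)
    (h : ∀ t ∈ Ioo a b, w * (t - m) ≤ c) (hu : u ∈ Ioo a b) : w * (u - m) < c := by
  obtain ⟨hau, hub⟩ := hu
  rcases lt_trichotomy w 0 with hw | rfl | hw
  · nlinarith [h ((a + u) / 2) ⟨by linarith, by linarith⟩]
  · simpa using hc
  · nlinarith [h ((u + b) / 2) ⟨by linarith, by linarith⟩]

/-- The Riccati inequality `z' ≥ z²/c` in integrated form, compared with its explicit solution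
`u ↦ c z(m) / (c - z(m)(u - m))` through `m`. -/
lemma exp_neg_integral_le_of_riccati (hc : 0 < c) (hz : ContinuousOn z (Ioo a b))
    (hbound : ∀ s ∈ Ioo a b, ∀ t ∈ Ioo a b, z s * (t - s) ≤ c)
    (hric : ∀ s ∈ Ioo a b, ∀ t ∈ Ioo a b, s ≤ t → z s * z t * (t - s) ≤ c * (z t - z s))
    {m p : ℝ} (hm : m ∈ Ioo a b) (hp : p ∈ Ioo a b) :
    Real.exp (-(1 / c) * ∫ u in m..p, z u) ≤ 1 - z m * (p - m) / c := by
  have hsub : uIcc m p ⊆ Ioo a b := ordConnected_Ioo.uIcc_subset hm hp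
  set W : ℝ → ℝ := fun u => c - z m * (u - m)
  have hW : ∀ u ∈ Ioo a b, 0 < W u := fun u hu =>
    sub_pos.2 (mul_sub_lt_of_forall_mul_sub_le hc (hbound m hm) hu)
  have hderiv : ∀ u ∈ uIcc m p,
      HasDerivAt (fun v => -c * Real.log (W v)) (c * z m / W u) u := by
    intro u hu
    have hWd : HasDerivAt W (-z m) u := by
      simpa using ((hasDerivAt_id u).sub_const m).const_mul (z m) |>.const_sub c
    exact ((hWd.log (hW u (hsub hu)).ne').const_mul (-c)).congr_deriv (by ring)
  have hψ_cont : ContinuousOn (fun u => c * z m / W u) (uIcc m p) :=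
    continuousOn_const.div (by fun_prop) fun u hu => (hW u (hsub hu)).ne'
  have hψ : ∫ u in m..p, c * z m / W u = c * Real.log c - c * Real.log (W p) := by
    rw [intervalIntegral.integral_eq_sub_of_hasDerivAt hderiv hψ_cont.intervalIntegrable]
    simp only [W, sub_self, mul_zero, sub_zero]
    ring
  have hcomp : ∫ u in m..p, c * z m / W u ≤ ∫ u in m..p, z u := by
    refine intervalIntegral.integral_le_integral_of_le_of_ge hψ_cont.intervalIntegrable
      (hz.mono hsub).intervalIntegrable (fun hmp u hu => ?_) (fun hpm u hu => ?_)
    · have hu' : u ∈ Ioo a b := hsub (Icc_subset_uIcc hu)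
      rw [div_le_iff₀ (hW u hu')]
      nlinarith [hric m hm u hu' hu.1]
    · have hu' : u ∈ Ioo a b := hsub (Icc_subset_uIcc' hu)
      rw [le_div_iff₀ (hW u hu')]
      nlinarith [hric u hu' m hm hu.2]
  have hWp : 0 < W p := hW p hp
  calc Real.exp (-(1 / c) * ∫ u in m..p, z u)
      ≤ Real.exp (Real.log (W p / c)) := by
        rw [Real.log_div hWp.ne' hc.ne', Real.exp_le_exp]
        have := mul_le_mul_of_nonneg_left hcomp (one_div_pos.2 hc).le
        rw [hψ] at this
        field_simp at this ⊢
        linarith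
    _ = 1 - z m * (p - m) / c := by
        rw [Real.exp_log (div_pos hWp hc), sub_div, div_self hc.ne']

lemma concaveOn_exp_neg_integral_of_riccati (hc : 0 < c) (hz : ContinuousOn z (Ioo a b))
    (hbound : ∀ s ∈ Ioo a b, ∀ t ∈ Ioo a b, z s * (t - s) ≤ c)
    (hric : ∀ s ∈ Ioo a b, ∀ t ∈ Ioo a b, s ≤ t → z s * z t * (t - s) ≤ c * (z t - z s))
    {r₀ : ℝ} (hr₀ : r₀ ∈ Ioo a b) :
    ConcaveOn ℝ (Ioo a b) fun r => Real.exp (-(1 / c) * ∫ u in r₀..r, z u) := by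
  refine concaveOn_of_le_add_mul_sub (convex_Ioo a b)
    (f' := fun m => -(z m) * Real.exp (-(1 / c) * ∫ u in r₀..m, z u) / c) fun m hm p hp => ?_
  have hint : ∀ x ∈ Ioo a b, ∀ y ∈ Ioo a b, IntervalIntegrable z volume x y := fun x hx y hy =>
    (hz.mono (ordConnected_Ioo.uIcc_subset hx hy)).intervalIntegrable
  rw [← intervalIntegral.integral_add_adjacent_intervals (hint r₀ hr₀ m hm) (hint m hm p hp),
    mul_add, Real.exp_add]
  have := mul_le_mul_of_nonneg_left (exp_neg_integral_le_of_riccati hc hz hbound hric hm hp)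
    (Real.exp_pos (-(1 / c) * ∫ u in r₀..m, z u)).le
  linear_combination this

end Riccati

theorem statement12_general {X : Type*} [MetricSpace X]
    (φ φc : X → ℝ) (hpair : IsKantorovichPair φ φc)
    (γ : ℝ → X) (hγ : IsKantorovichGeodesic φ φc γ)
    (hl : 0 < dist (γ 0) (γ 1))
    (zac : ℝ → ℝ)
    (hac : ∃ g : ℝ → ℝ,
      (∀ x ∈ Set.Ioo (0:ℝ) 1, ∀ y ∈ Set.Ioo (0:ℝ) 1,
        IntervalIntegrable g MeasureTheory.volume x y) ∧
      (∀ x ∈ Set.Ioo (0:ℝ) 1, ∀ y ∈ Set.Ioo (0:ℝ) 1,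
        zac y = zac x + ∫ u in x..y, g u))
    (hae : ∀ᵐ t ∂((MeasureTheory.volume : MeasureTheory.Measure ℝ).restrict
        (Set.Ioo (0:ℝ) 1)),
      HasSecondPeanoDerivAt (fun τ => interpPotential φ τ (γ t)) (zac t) t ∧
      HasSecondPeanoDerivAt (fun τ => reversePotential φc τ (γ t)) (zac t) t)
    (r₀ : ℝ) (hr₀ : r₀ ∈ Set.Ioo (0:ℝ) 1) :
    ConcaveOn ℝ (Set.Ioo (0:ℝ) 1)
      (fun r => Real.exp (-(1 / dist (γ 0) (γ 1) ^ 2) * ∫ u in r₀..r, zac u)) := by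
  obtain ⟨g, hg, hzg⟩ := hac
  have hz := continuousOn_of_forall_eq_add_integral hg hzg
  have hquad := quadratic_nonneg_of_ae hpair.2 hγ hz (hae.mono fun _ h => h.1)
  have hc : 0 < dist (γ 0) (γ 1) ^ 2 := by positivity
  exact concaveOn_exp_neg_integral_of_riccati hc hz
    (mul_sub_le_of_forall_quadratic_nonneg hc hquad)
    (riccati_of_forall_quadratic_nonneg hc hquad) hr₀

/-- If `z_ac` is locally absolutely continuous on `(0,1)` and for a.e. `t ∈ (0,1)` both
`τ ↦ φ_τ(γ_t)` and `τ ↦ φ̄_τ(γ_t)` have second Peano derivative `z_ac(t)` at `τ = t`,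
then `L(r) := exp(-(1/ℓ²)·∫_{r₀}^r z_ac(t) dt)` is concave on `(0,1)`. -/
theorem statement12 {X : Type*} [MetricSpace X] [ProperSpace X]
    (hgeo : IsGeodesicSpace X) (φ φc : X → ℝ) (hpair : IsKantorovichPair φ φc)
    (γ : ℝ → X) (hγ : IsKantorovichGeodesic φ φc γ)
    (hl : 0 < dist (γ 0) (γ 1))
    (zac : ℝ → ℝ)
    (hac : ∃ g : ℝ → ℝ,
      (∀ x ∈ Set.Ioo (0:ℝ) 1, ∀ y ∈ Set.Ioo (0:ℝ) 1,
        IntervalIntegrable g MeasureTheory.volume x y) ∧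
      (∀ x ∈ Set.Ioo (0:ℝ) 1, ∀ y ∈ Set.Ioo (0:ℝ) 1,
        zac y = zac x + ∫ u in x..y, g u))
    (hae : ∀ᵐ t ∂((MeasureTheory.volume : MeasureTheory.Measure ℝ).restrict
        (Set.Ioo (0:ℝ) 1)),
      HasSecondPeanoDerivAt (fun τ => interpPotential φ τ (γ t)) (zac t) t ∧
      HasSecondPeanoDerivAt (fun τ => reversePotential φc τ (γ t)) (zac t) t)
    (r₀ : ℝ) (hr₀ : r₀ ∈ Set.Ioo (0:ℝ) 1) :
    ConcaveOn ℝ (Set.Ioo (0:ℝ) 1)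
      (fun r => Real.exp (-(1 / dist (γ 0) (γ 1) ^ 2) * ∫ u in r₀..r, zac u)) :=
  statement12_general φ φc hpair γ hγ hl zac hac hae r₀ hr₀
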